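/- If a homeomorphism f : X → X of a compact metric space has the shadowing property and its non-wandering set Ω(f) is expansive (for the restriction f|_{Ω(f)}), then there exists ε > 0 such that for each r > 0 there exists k_r ∈ ℕ satisfying f^n(W^s_ε(x)) ⊆ W^s_r(f^n(x)) and f^{−n}(W^u_ε(x)) ⊆ W^u_r(f^{−n}(x)) for every x ∈ Ω(f) and n ≥ k_r. -/

import Mathlib

open Topology Filter Metric TopologicalSpace

namespace LS

variable {X Y : Type*} [MetricSpace X] [MetricSpace Y]

/-- finite forward iterates of a homeomorphism -/
def hpowAux (f : X ≃ₜ X) : ℕ → X ≃ₜ X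
  | 0 => Homeomorph.refl X
  | n+1 => (hpowAux f n).trans f

/-- `ℤ`-iterates of a homeomorphism: `hpow f k` is the `k`-th iterate `f^k`. -/
def hpow (f : X ≃ₜ X) : ℤ → X ≃ₜ X
  | Int.ofNat n => hpowAux f n
  | Int.negSucc n => (hpowAux f (n+1)).symm

/-- the `ℤ`-iteration map of `f` -/
def F (f : X ≃ₜ X) : ℤ → X → X := fun k => hpow f k

/-- δ-limit-pseudo-orbit for a system given by its iterate family `T` -/
def IsLimitPseudoOrbit (T : ℤ → Y → Y) (δ : ℝ) (x : ℤ → Y) : Prop :=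
  (∀ k : ℤ, dist (T 1 (x k)) (x (k+1)) ≤ δ) ∧
  Tendsto (fun k : ℤ => dist (T 1 (x k)) (x (k+1))) (cocompact ℤ) (𝓝 0)

/-- `z` ε-limit-shadows the sequence `x` -/
def LimitShadows (T : ℤ → Y → Y) (ε : ℝ) (x : ℤ → Y) (z : Y) : Prop :=
  (∀ k : ℤ, dist (T k z) (x k) ≤ ε) ∧
  Tendsto (fun k : ℤ => dist (T k z) (x k)) (cocompact ℤ) (𝓝 0)

/-- the L-shadowing property -/
def LShadowing (T : ℤ → Y → Y) : Prop :=
  ∀ ε > (0:ℝ), ∃ δ > (0:ℝ), ∀ x : ℤ → Y, IsLimitPseudoOrbit T δ x → ∃ z, LimitShadows T ε x z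

/-- the shadowing property -/
def Shadowing (T : ℤ → Y → Y) : Prop :=
  ∀ ε > (0:ℝ), ∃ δ > (0:ℝ), ∀ x : ℤ → Y,
    (∀ k : ℤ, dist (T 1 (x k)) (x (k+1)) < δ) → ∃ z, ∀ k : ℤ, dist (T k z) (x k) < ε

/-- local c-stable set -/
def Ws (f : X ≃ₜ X) (c : ℝ) (x : X) : Set X :=
  {y | ∀ k : ℤ, 0 ≤ k → dist (F f k y) (F f k x) ≤ c}

/-- local c-unstable set -/
def Wu (f : X ≃ₜ X) (c : ℝ) (x : X) : Set X :=
  {y | ∀ k : ℤ, k ≤ 0 → dist (F f k y) (F f k x) ≤ c}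

/-- stable set -/
def WsA (f : X ≃ₜ X) (x : X) : Set X :=
  {y | Tendsto (fun k : ℤ => dist (F f k y) (F f k x)) atTop (𝓝 0)}

/-- unstable set -/
def WuA (f : X ≃ₜ X) (x : X) : Set X :=
  {y | Tendsto (fun k : ℤ => dist (F f k y) (F f k x)) atBot (𝓝 0)}

/-- asymptotic local stable set -/
def Vs (f : X ≃ₜ X) (c : ℝ) (x : X) : Set X := WsA f x ∩ Ws f c x

/-- asymptotic local unstable set -/
def Vu (f : X ≃ₜ X) (c : ℝ) (x : X) : Set X := WuA f x ∩ Wu f c x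

/-- image of a nonempty compact set under a homeomorphism -/
def himg (f : X ≃ₜ X) (A : NonemptyCompacts X) : NonemptyCompacts X :=
  ⟨⟨f '' A, A.isCompact.image f.continuous⟩, A.nonempty.image f⟩

/-- the `ℤ`-iteration family of the induced hyperspace map `2^f` -/
def HF (f : X ≃ₜ X) : ℤ → NonemptyCompacts X → NonemptyCompacts X :=
  fun k A => himg (hpow f k) A

end LS

/-- the non-wandering set of `f` -/
def LS.Omega {X : Type*} [MetricSpace X] (f : X ≃ₜ X) : Set X :=
  {x | ∀ η > (0:ℝ), ∃ y : X, dist x y < η ∧ ∃ n : ℕ, 0 < n ∧ dist (LS.F f n y) x < η}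

/-! If the contraction were not uniform, compactness would produce a non-wandering point `a`
and a point `b ≠ a` with `d(fᵗ b, fᵗ a) ≤ ε` for all `t ∈ ℤ`. Expansiveness on `Ω(f)` gives
`Wˢ_ε(x) ⊆ Wˢ(x)` for `x ∈ Ω(f)`: an ω-limit point of `y ∈ Wˢ_ε(x)` is non-wandering and stays
`ε`-close along its whole orbit to the matching ω-limit point of `x`, so the two coincide.
Applied to `f` and `f⁻¹`, this makes `b` bi-asymptotic to `a`. Shadowing a pseudo-orbit that
leaves the orbit of `b`, follows a late return of `a` and then rejoins the orbit of `b` shows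
that `b` is non-wandering, so `b = a` by expansiveness. The unstable half is the stable half
for `f⁻¹`. -/

namespace LS

variable {X : Type*} [MetricSpace X]

theorem hpowAux_eq_pow (f : X ≃ₜ X) (n : ℕ) : hpowAux f n = f ^ n := by
  induction n with
  | zero => rfl
  | succ n ih => rw [pow_succ', ← ih]; rfl

theorem hpow_eq_zpow (f : X ≃ₜ X) (k : ℤ) : hpow f k = f ^ k := by
  cases k with
  | ofNat n => exact hpowAux_eq_pow f n
  | negSucc n => rw [zpow_negSucc, ← hpowAux_eq_pow]; rfl

theorem F_eq_zpow (f : X ≃ₜ X) (k : ℤ) : F f k = ⇑(f ^ k) := by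
  rw [← hpow_eq_zpow]; rfl

@[simp]
theorem F_zero (f : X ≃ₜ X) (x : X) : F f 0 x = x := rfl

@[simp]
theorem F_one (f : X ≃ₜ X) (x : X) : F f 1 x = f x := rfl

theorem F_add (f : X ≃ₜ X) (s t : ℤ) (x : X) : F f (s + t) x = F f s (F f t x) := by
  rw [F_eq_zpow, zpow_add, Homeomorph.mul_apply, F_eq_zpow, F_eq_zpow]

theorem F_symm (f : X ≃ₜ X) (k : ℤ) : F f.symm k = F f (-k) := by
  rw [F_eq_zpow, F_eq_zpow, zpow_neg, ← inv_zpow]; rfl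

theorem continuous_F (f : X ≃ₜ X) (k : ℤ) : Continuous (F f k) := (hpow f k).continuous

theorem Wu_eq_Ws_symm (f : X ≃ₜ X) (c : ℝ) (x : X) : Wu f c x = Ws f.symm c x := by
  ext y
  exact ⟨fun h k hk => by simpa [F_symm] using h (-k) (by omega),
    fun h k hk => by simpa [F_symm] using h (-k) (by omega)⟩

theorem WuA_eq_WsA_symm (f : X ≃ₜ X) (x : X) : WuA f x = WsA f.symm x := by
  ext y
  simp only [WuA, WsA, F_symm]
  exact tendsto_comp_neg_atTop_iff.symm

def IsPseudoOrbit (f : X ≃ₜ X) (δ : ℝ) (w : ℤ → X) : Prop :=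
  ∀ k : ℤ, dist (F f 1 (w k)) (w (k + 1)) < δ

theorem isPseudoOrbit_orbit (f : X ≃ₜ X) {δ : ℝ} (hδ : 0 < δ) (x : X) :
    IsPseudoOrbit f δ fun k => F f k x := fun k => by
  rwa [← F_add, add_comm, dist_self]

theorem IsPseudoOrbit.splice {f : X ≃ₜ X} {δ : ℝ} {a b : ℤ → X} (ha : IsPseudoOrbit f δ a)
    (hb : IsPseudoOrbit f δ b) {K : ℤ} (hK : dist (F f 1 (a K)) (b (K + 1)) < δ) :
    IsPseudoOrbit f δ fun k => if k ≤ K then a k else b k := by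
  intro k
  rcases lt_trichotomy k K with hk | rfl | hk
  · simpa only [if_pos hk.le, if_pos (show k + 1 ≤ K by omega)] using ha k
  · simpa only [le_refl, if_true, if_neg (show ¬k + 1 ≤ k by omega)] using hK
  · simpa only [if_neg (show ¬k ≤ K by omega), if_neg (show ¬k + 1 ≤ K by omega)] using hb k

theorem Shadowing.symm [CompactSpace X] {f : X ≃ₜ X} (hsh : Shadowing (F f)) :
    Shadowing (F f.symm) := by
  intro ε hε
  obtain ⟨δ, hδ, hs⟩ := hsh ε hε
  obtain ⟨δ', hδ', hδ'δ⟩ := Metric.uniformContinuous_iff.1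
    (CompactSpace.uniformContinuous_of_continuous f.continuous) δ hδ
  refine ⟨δ', hδ', fun w hw => ?_⟩
  obtain ⟨z, hz⟩ := hs (fun k => w (-k)) fun k => by
    have := hδ'δ (hw (-(k + 1)))
    rwa [F_one, Homeomorph.apply_symm_apply, show -(k + 1) + 1 = -k by ring, dist_comm] at this
  exact ⟨z, fun k => by simpa [F_symm] using hz (-k)⟩

theorem Omega_subset_Omega_symm (f : X ≃ₜ X) : Omega f ⊆ Omega f.symm := by
  intro x hx η hη
  obtain ⟨y, hxy, n, hn, hyn⟩ := hx η hη
  refine ⟨F f n y, by rwa [dist_comm], n, hn, ?_⟩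
  rwa [F_symm, ← F_add, neg_add_cancel, F_zero, dist_comm]

theorem Omega_symm (f : X ≃ₜ X) : Omega f.symm = Omega f :=
  (Omega_subset_Omega_symm f).antisymm' (by simpa using Omega_subset_Omega_symm f.symm)

theorem F_mem_Omega {f : X ≃ₜ X} {x : X} (hx : x ∈ Omega f) (t : ℤ) : F f t x ∈ Omega f := by
  intro η hη
  obtain ⟨ρ, hρ, hρη⟩ := Metric.continuous_iff.1 (continuous_F f t) x η hη
  obtain ⟨y, hxy, n, hn, hyn⟩ := hx ρ hρ
  refine ⟨F f t y, ?_, n, hn, ?_⟩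
  · rw [dist_comm]; exact hρη y (by rwa [dist_comm])
  · rw [← F_add, add_comm, F_add]; exact hρη _ hyn

theorem isClosed_Omega (f : X ≃ₜ X) : IsClosed (Omega f) := by
  refine isClosed_of_closure_subset fun x hx η hη => ?_
  obtain ⟨y, hy, hxy⟩ := Metric.mem_closure_iff.1 hx (η / 2) (half_pos hη)
  obtain ⟨z, hyz, n, hn, hzn⟩ := hy (η / 2) (half_pos hη)
  refine ⟨z, by linarith [dist_triangle x y z], n, hn, ?_⟩
  linarith [dist_triangle (F f n z) y x, dist_comm x y]

theorem mem_Omega_of_tendsto_F {f : X ≃ₜ X} {v b : X} {T : ℕ → ℤ} (hT : Tendsto T atTop atTop)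
    (hb : Tendsto (fun i => F f (T i) v) atTop (𝓝 b)) : b ∈ Omega f := by
  intro η hη
  obtain ⟨i, hi⟩ := eventually_atTop.1 (hb.eventually (ball_mem_nhds b hη))
  obtain ⟨j, hij, hTij⟩ := ((eventually_ge_atTop i).and (hT.eventually_gt_atTop (T i))).exists
  refine ⟨F f (T i) v, by rw [dist_comm]; exact hi i le_rfl, (T j - T i).toNat, by omega, ?_⟩
  rw [Int.toNat_of_nonneg (by omega), ← F_add, sub_add_cancel]
  exact hi j hij

theorem F_mul_eq_self {f : X ≃ₜ X} {x : X} {p : ℕ} (hp : F f p x = x) (m : ℕ) :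
    F f (p * m : ℕ) x = x := by
  induction m with
  | zero => simp
  | succ m ih => rw [Nat.mul_succ, Nat.cast_add, F_add, hp, ih]

/-- A non-periodic point is moved away from itself by the first `M` iterates of all nearby
points, so its returns to small neighbourhoods are late. -/
theorem exists_late_return {f : X ≃ₜ X} {u : X} (hu : u ∈ Omega f) {η : ℝ} (hη : 0 < η)
    (M : ℕ) : ∃ q : X, ∃ n : ℕ, M ≤ n ∧ dist q u < η ∧ dist (F f n q) u < η := by
  by_cases hper : ∃ p ∈ Finset.Ico 1 M, F f p u = u
  · obtain ⟨p, hp, hpu⟩ := hper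
    refine ⟨u, p * M, Nat.le_mul_of_pos_left M (Finset.mem_Ico.1 hp).1, by simpa, ?_⟩
    rwa [F_mul_eq_self hpu M, dist_self]
  push Not at hper
  have hev : ∀ᶠ z : X × X in 𝓝 (u, u), ∀ p ∈ Finset.Ico 1 M, F f p z.1 ≠ z.2 :=
    (eventually_all_finset _).2 fun p hp =>
      (isOpen_ne_fun ((continuous_F f p).comp continuous_fst) continuous_snd).mem_nhds (hper p hp)
  obtain ⟨ρ, hρ, hρM⟩ := Metric.eventually_nhds_iff.1 hev
  obtain ⟨y, hy, n, hn, hyn⟩ := hu (min η ρ) (lt_min hη hρ)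
  rw [dist_comm] at hy
  refine ⟨y, n, ?_, hy.trans_le (min_le_left _ _), hyn.trans_le (min_le_left _ _)⟩
  by_contra! hnM
  refine hρM (y := (y, F f n y)) ?_ n (Finset.mem_Ico.2 ⟨hn, hnM⟩) rfl
  rw [Prod.dist_eq, max_lt_iff]
  exact ⟨hy.trans_le (min_le_right _ _), hyn.trans_le (min_le_right _ _)⟩

theorem mem_Omega_of_forall_isPseudoOrbit {f : X ≃ₜ X} (hsh : Shadowing (F f)) {v : X}
    (h : ∀ δ > 0, ∃ w : ℤ → X, ∃ N : ℕ, IsPseudoOrbit f δ w ∧ 0 < N ∧ w 0 = v ∧ w N = v) :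
    v ∈ Omega f := by
  intro η hη
  obtain ⟨δ, hδ, hs⟩ := hsh η hη
  obtain ⟨w, N, hw, hN, hw0, hwN⟩ := h δ hδ
  obtain ⟨z, hz⟩ := hs w hw
  exact ⟨z, by simpa [hw0, dist_comm] using hz 0, N, hN, by simpa [hwN] using hz N⟩

/-- The closing pseudo-orbit follows `v` up to time `K`, then a late return `q` of `u` until
time `N - K - 1`, then the orbit of `v` again, shifted by `N`. -/
theorem mem_Omega_of_mem_WsA_of_mem_WuA {f : X ≃ₜ X} (hsh : Shadowing (F f)) {u v : X}
    (hu : u ∈ Omega f) (hvs : v ∈ WsA f u) (hvu : v ∈ WuA f u) : v ∈ Omega f := by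
  refine mem_Omega_of_forall_isPseudoOrbit hsh fun δ hδ => ?_
  have hδ2 : 0 < δ / 2 := half_pos hδ
  obtain ⟨K, hKfwd, hKbwd⟩ : ∃ K : ℕ, dist (F f (K + 1) v) (F f (K + 1) u) < δ / 2 ∧
      dist (F f (-K) v) (F f (-K) u) < δ / 2 := by
    have hfwd := (tendsto_natCast_atTop_atTop.comp (tendsto_add_atTop_nat 1)).eventually
      (hvs.eventually (gt_mem_nhds hδ2))
    have hbwd := (tendsto_neg_atTop_atBot.comp tendsto_natCast_atTop_atTop).eventually
      (hvu.eventually (gt_mem_nhds hδ2))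
    simpa using (hfwd.and hbwd).exists
  obtain ⟨ρ, hρ, hρu⟩ := Metric.eventually_nhds_iff.1
    ((((continuous_F f (K + 1)).tendsto u).eventually (ball_mem_nhds _ hδ2)).and
      (((continuous_F f (-K)).tendsto u).eventually (ball_mem_nhds _ hδ2)))
  obtain ⟨q, N, hN, hq, hqN⟩ := exists_late_return hu hρ (2 * K + 2)
  refine ⟨fun k => if k ≤ K then F f k v else if k ≤ N - K - 1 then F f k q
    else F f k (F f (-N) v), N, ?_, by omega, by simp, ?_⟩
  · refine (isPseudoOrbit_orbit f hδ v).splice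
      ((isPseudoOrbit_orbit f hδ q).splice (isPseudoOrbit_orbit f hδ _) ?_) ?_
    · rw [← F_add, ← F_add, show 1 + (N - K - 1 : ℤ) = -K + N by ring,
        show (N - K - 1 + 1 : ℤ) + -N = -K by ring, F_add]
      linarith [dist_triangle_right (F f (-K) (F f N q)) (F f (-K) v) (F f (-K) u),
        (hρu hqN).2]
    · rw [if_pos (by omega), ← F_add, add_comm]
      linarith [dist_triangle_right (F f (K + 1) v) (F f (K + 1) q) (F f (K + 1) u), (hρu hq).1]
  · simp [show ¬(N : ℤ) ≤ K by omega, ← F_add]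

def ExpansiveOn (f : X ≃ₜ X) (c : ℝ) (s : Set X) : Prop :=
  ∀ x ∈ s, ∀ y ∈ s, (∀ k : ℤ, dist (F f k y) (F f k x) ≤ c) → y = x

theorem ExpansiveOn.symm {f : X ≃ₜ X} {c : ℝ} {s : Set X} (hexp : ExpansiveOn f c s) :
    ExpansiveOn f.symm c s := fun x hx y hy h =>
  hexp x hx y hy fun k => by simpa [F_symm] using h (-k)

theorem dist_F_le_of_tendsto {f : X ≃ₜ X} {c : ℝ} {x y : ℕ → X} {T : ℕ → ℤ} {a b : X}
    (hy : ∀ i, y i ∈ Ws f c (x i)) (hT : Tendsto T atTop atTop)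
    (ha : Tendsto (fun i => F f (T i) (x i)) atTop (𝓝 a))
    (hb : Tendsto (fun i => F f (T i) (y i)) atTop (𝓝 b)) (t : ℤ) :
    dist (F f t b) (F f t a) ≤ c := by
  refine le_of_tendsto ((((continuous_F f t).tendsto b).comp hb).dist
    (((continuous_F f t).tendsto a).comp ha)) ?_
  filter_upwards [hT.eventually_ge_atTop (-t)] with i hi
  simpa only [Function.comp_apply, F_add] using hy i (t + T i) (by omega)

variable [CompactSpace X]

theorem Ws_subset_WsA {f : X ≃ₜ X} {c : ℝ} (hexp : ExpansiveOn f c (Omega f)) {u : X}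
    (hu : u ∈ Omega f) : Ws f c u ⊆ WsA f u := by
  intro v hv
  by_contra h
  obtain ⟨r, hr, hfreq⟩ : ∃ r > 0, ∃ᶠ k in atTop, r ≤ dist (F f k v) (F f k u) := by
    simpa [WsA, Metric.tendsto_nhds, Real.dist_eq, abs_dist, frequently_atTop] using h
  obtain ⟨T, hT, hTr⟩ := exists_seq_forall_of_frequently hfreq
  obtain ⟨⟨a, b⟩, -, ψ, hψ, hlim⟩ := isCompact_univ.tendsto_subseq
    (x := fun i => (F f (T i) u, F f (T i) v)) fun _ => Set.mem_univ _
  have hTψ : Tendsto (T ∘ ψ) atTop atTop := hT.comp hψ.tendsto_atTop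
  have ha := (continuous_fst.tendsto _).comp hlim
  have hb := (continuous_snd.tendsto _).comp hlim
  have haΩ : a ∈ Omega f :=
    (isClosed_Omega f).mem_of_tendsto ha (Eventually.of_forall fun i => F_mem_Omega hu _)
  have hba : b = a := hexp a haΩ b (mem_Omega_of_tendsto_F hTψ hb)
    (dist_F_le_of_tendsto (x := fun _ => u) (y := fun _ => v) (fun _ => hv) hTψ ha hb)
  have hrba : r ≤ dist b a := ge_of_tendsto (hb.dist ha) (Eventually.of_forall fun i => hTr (ψ i))
  rw [hba, dist_self] at hrba
  exact hr.not_ge hrba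

theorem exists_dist_F_le_of_mem_Ws {f : X ≃ₜ X} (hsh : Shadowing (F f)) {c : ℝ}
    (hexp : ExpansiveOn f c (Omega f)) {r : ℝ} (hr : 0 < r) :
    ∃ k : ℕ, ∀ x ∈ Omega f, ∀ y ∈ Ws f c x, ∀ t : ℤ, k ≤ t → dist (F f t y) (F f t x) ≤ r := by
  by_contra! h
  choose x hx y hy T hT hTr using h
  obtain ⟨⟨a, b⟩, -, ψ, hψ, hlim⟩ := isCompact_univ.tendsto_subseq
    (x := fun i => (F f (T i) (x i), F f (T i) (y i))) fun _ => Set.mem_univ _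
  have hTψ : Tendsto (T ∘ ψ) atTop atTop := tendsto_atTop_mono
    (fun i => (Nat.cast_le.2 (hψ.id_le i)).trans (hT (ψ i))) tendsto_natCast_atTop_atTop
  have ha := (continuous_fst.tendsto _).comp hlim
  have hb := (continuous_snd.tendsto _).comp hlim
  have haΩ : a ∈ Omega f :=
    (isClosed_Omega f).mem_of_tendsto ha (Eventually.of_forall fun i => F_mem_Omega (hx _) _)
  have hab : ∀ t, dist (F f t b) (F f t a) ≤ c :=
    dist_F_le_of_tendsto (x := x ∘ ψ) (y := y ∘ ψ) (fun i => hy (ψ i)) hTψ ha hb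
  have hbs : b ∈ WsA f a := Ws_subset_WsA hexp haΩ fun t _ => hab t
  have hbu : b ∈ WuA f a := by
    rw [WuA_eq_WsA_symm]
    refine Ws_subset_WsA (by rw [Omega_symm]; exact hexp.symm) (by rwa [Omega_symm])
      fun t _ => ?_
    simpa [F_symm] using hab (-t)
  have hba : b = a := hexp a haΩ b (mem_Omega_of_mem_WsA_of_mem_WuA hsh haΩ hbs hbu) hab
  have hrba : r ≤ dist b a :=
    ge_of_tendsto (hb.dist ha) (Eventually.of_forall fun i => (hTr (ψ i)).le)
  rw [hba, dist_self] at hrba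
  exact hr.not_ge hrba

theorem exists_image_F_Ws_subset {f : X ≃ₜ X} (hsh : Shadowing (F f)) {c : ℝ}
    (hexp : ExpansiveOn f c (Omega f)) {r : ℝ} (hr : 0 < r) :
    ∃ k : ℕ, ∀ x ∈ Omega f, ∀ n : ℕ, k ≤ n → F f n '' Ws f c x ⊆ Ws f r (F f n x) := by
  obtain ⟨k, hk⟩ := exists_dist_F_le_of_mem_Ws hsh hexp hr
  refine ⟨k, fun x hx n hn => ?_⟩
  rintro _ ⟨y, hy, rfl⟩ t ht
  rw [← F_add, ← F_add]
  exact hk x hx y hy _ (by omega)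

end LS

/-- shadowing plus expansiveness of the non-wandering set gives uniform
contractions on the local stable/unstable sets of non-wandering points. -/
theorem stmt_6 {X : Type*} [MetricSpace X] [CompactSpace X] (f : X ≃ₜ X)
    (hsh : LS.Shadowing (LS.F f))
    (hexp : ∃ c > (0:ℝ), ∀ x ∈ LS.Omega f, ∀ y ∈ LS.Omega f,
      (∀ k : ℤ, dist (LS.F f k y) (LS.F f k x) ≤ c) → y = x) :
    ∃ ε > (0:ℝ), ∀ r > (0:ℝ), ∃ k : ℕ, ∀ x ∈ LS.Omega f, ∀ n : ℕ, k ≤ n →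
      (LS.F f n '' LS.Ws f ε x ⊆ LS.Ws f r (LS.F f n x)) ∧
      (LS.F f (-(n:ℤ)) '' LS.Wu f ε x ⊆ LS.Wu f r (LS.F f (-(n:ℤ)) x)) := by
  obtain ⟨c, hc, hexp⟩ := hexp
  refine ⟨c, hc, fun r hr => ?_⟩
  obtain ⟨k₁, hk₁⟩ := LS.exists_image_F_Ws_subset hsh hexp hr
  obtain ⟨k₂, hk₂⟩ := LS.exists_image_F_Ws_subset hsh.symm
    (by rw [LS.Omega_symm]; exact LS.ExpansiveOn.symm hexp) hr
  refine ⟨max k₁ k₂, fun x hx n hn => ⟨hk₁ x hx n (le_of_max_le_left hn), ?_⟩⟩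
  rw [LS.Wu_eq_Ws_symm, LS.Wu_eq_Ws_symm, ← LS.F_symm]
  exact hk₂ x (by rwa [LS.Omega_symm]) n (le_of_max_le_right hn)
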